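/- arXiv:2111.02588 — 5 statements merged into one kernel-verified Lean document; each statement's English description precedes it below -/
import Mathlib

section
/- Let G be a group, and let X be a topological space with finitely many connected components, with component set X₀ and component map i_X : X → X₀. Let τ : X^G → X^G be a cellular automaton with finite memory set M and continuous local defining map f : X^M → X. Define τ₀ : X₀^G → X₀^G as the cellular automaton with local defining map f₀ : X₀^M → X₀ induced on connected components. Then i_{X^G} ∘ τ = τ₀ ∘ i_{X^G}, where i_{X^G} : X^G → X₀^G applies i_X coordinatewise. Moreover, if σ is another cellular automaton over X with continuous local defining map, then (σ ∘ τ)₀ = σ₀ ∘ τ₀. -/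
open ConnectedComponents

/-! A continuous map sends the product of the components of the coordinates of `x`, which is the
component of `x` in the product, into one component; so the local rule `f` descends to a map `f₀`
on tuples of components, and a cellular automaton over `X` is semiconjugated by `i_X` to the one
over `X₀` with local rule `f₀`. Composition is handled by applying this twice. -/

theorem ConnectedComponents.mk_pi_eq_mk_pi_iff {ι : Type*} {X : ι → Type*}
    [∀ i, TopologicalSpace (X i)] {x y : ∀ i, X i} :
    (mk x : ConnectedComponents (∀ i, X i)) = mk y ↔ ∀ i, mk (x i) = mk (y i) := by
  simp only [coe_eq_coe', connectedComponent_pi, Set.mem_univ_pi]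

theorem Continuous.mk_apply_eq_of_forall_mk_eq {ι Y : Type*} {X : ι → Type*}
    [∀ i, TopologicalSpace (X i)] [TopologicalSpace Y] {f : (∀ i, X i) → Y} (hf : Continuous f)
    {x y : ∀ i, X i} (h : ∀ i, ConnectedComponents.mk (x i) = ConnectedComponents.mk (y i)) :
    ConnectedComponents.mk (f x) = ConnectedComponents.mk (f y) := by
  rw [← hf.connectedComponentsMap_mk, ← hf.connectedComponentsMap_mk,
    mk_pi_eq_mk_pi_iff.2 h]

namespace ConnectedComponents

variable {ι Y : Type*} {X : ι → Type*} [∀ i, TopologicalSpace (X i)] [TopologicalSpace Y]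

noncomputable def piLift (f : (∀ i, X i) → Y) :
    (∀ i, ConnectedComponents (X i)) → ConnectedComponents Y :=
  fun c => mk (f fun i => Function.surjInv surjective_coe (c i))

theorem piLift_mk {f : (∀ i, X i) → Y} (hf : Continuous f) (x : ∀ i, X i) :
    piLift f (fun i => mk (x i)) = mk (f x) :=
  hf.mk_apply_eq_of_forall_mk_eq fun _ => Function.surjInv_eq surjective_coe _

end ConnectedComponents

theorem cellularAutomaton_map_eq_map_cellularAutomaton {G M A B : Type*} [Mul G] (ι : M → G)
    {f : (M → A) → A} {f₀ : (M → B) → B} {φ : A → B} (hφ : ∀ x, f₀ (fun m => φ (x m)) = φ (f x))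
    {τ : (G → A) → G → A} {τ₀ : (G → B) → G → B}
    (hτ : ∀ c a, τ c a = f fun m => c (a * ι m)) (hτ₀ : ∀ c a, τ₀ c a = f₀ fun m => c (a * ι m))
    (c : G → A) : τ₀ (fun h => φ (c h)) = fun h => φ (τ c h) := by
  funext a
  rw [hτ₀, hτ, hφ]

theorem induced_cellularAutomaton_on_connectedComponents_general
    (G X : Type*) [Group G] [TopologicalSpace X]
    (M : Finset G) (f g : (M → X) → X) (hf : Continuous f) (hg : Continuous g)
    (τ σ : (G → X) → (G → X))
    (hτ : ∀ (c : G → X) (a : G), τ c a = f fun m => c (a * (m : G)))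
    (hσ : ∀ (c : G → X) (a : G), σ c a = g fun m => c (a * (m : G))) :
    ∃ (f₀ g₀ : (M → ConnectedComponents X) → ConnectedComponents X),
      (∀ x : M → X, f₀ (fun m => ConnectedComponents.mk (x m)) = ConnectedComponents.mk (f x)) ∧
      (∀ x : M → X, g₀ (fun m => ConnectedComponents.mk (x m)) = ConnectedComponents.mk (g x)) ∧
      ∀ (τ₀ σ₀ : (G → ConnectedComponents X) → (G → ConnectedComponents X)),
        (∀ (c : G → ConnectedComponents X) (a : G), τ₀ c a = f₀ fun m => c (a * (m : G))) →
        (∀ (c : G → ConnectedComponents X) (a : G), σ₀ c a = g₀ fun m => c (a * (m : G))) →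
        (∀ c : G → X,
            τ₀ (fun h => ConnectedComponents.mk (c h)) = fun h => ConnectedComponents.mk (τ c h)) ∧
        (∀ c : G → X,
            σ₀ (τ₀ (fun h => ConnectedComponents.mk (c h)))
              = fun h => ConnectedComponents.mk (σ (τ c) h)) := by
  refine ⟨piLift f, piLift g, piLift_mk hf, piLift_mk hg, fun τ₀ σ₀ hτ₀ hσ₀ => ?_⟩
  have hτ_semiconj := cellularAutomaton_map_eq_map_cellularAutomaton Subtype.val
    (piLift_mk hf) hτ hτ₀
  refine ⟨hτ_semiconj, fun c => ?_⟩
  rw [hτ_semiconj c]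
  exact cellularAutomaton_map_eq_map_cellularAutomaton Subtype.val (piLift_mk hg) hσ hσ₀ (τ c)

/-- Let `X` be a topological space with finitely many connected components and let
`τ, σ : X^G → X^G` be cellular automata with finite memory set `M` and continuous
local defining maps `f, g : X^M → X`. Then the induced local maps
`f₀, g₀ : X₀^M → X₀` on connected components exist (well-definedness), and the
induced cellular automata `τ₀, σ₀ : X₀^G → X₀^G` satisfy
`i_{X^G} ∘ τ = τ₀ ∘ i_{X^G}` and `(σ ∘ τ)₀ = σ₀ ∘ τ₀` (functoriality). -/
theorem induced_cellularAutomaton_on_connectedComponents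
    (G X : Type*) [Group G] [TopologicalSpace X] [Finite (ConnectedComponents X)]
    (M : Finset G) (f g : (M → X) → X) (hf : Continuous f) (hg : Continuous g)
    (τ σ : (G → X) → (G → X))
    (hτ : ∀ (c : G → X) (a : G), τ c a = f fun m => c (a * (m : G)))
    (hσ : ∀ (c : G → X) (a : G), σ c a = g fun m => c (a * (m : G))) :
    ∃ (f₀ g₀ : (M → ConnectedComponents X) → ConnectedComponents X),
      (∀ x : M → X, f₀ (fun m => ConnectedComponents.mk (x m)) = ConnectedComponents.mk (f x)) ∧
      (∀ x : M → X, g₀ (fun m => ConnectedComponents.mk (x m)) = ConnectedComponents.mk (g x)) ∧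
      ∀ (τ₀ σ₀ : (G → ConnectedComponents X) → (G → ConnectedComponents X)),
        (∀ (c : G → ConnectedComponents X) (a : G), τ₀ c a = f₀ fun m => c (a * (m : G))) →
        (∀ (c : G → ConnectedComponents X) (a : G), σ₀ c a = g₀ fun m => c (a * (m : G))) →
        (∀ c : G → X,
            τ₀ (fun h => ConnectedComponents.mk (c h)) = fun h => ConnectedComponents.mk (τ c h)) ∧
        (∀ c : G → X,
            σ₀ (τ₀ (fun h => ConnectedComponents.mk (c h)))
              = fun h => ConnectedComponents.mk (σ (τ c) h)) :=
  induced_cellularAutomaton_on_connectedComponents_general G X M f g hf hg τ σ hτ hσ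
end

section
/- Let G be a group and let E be a complex elliptic curve (or more generally, a divisible abelian group A in which the equation 2P = 0 has a nonzero solution). Define τ : A^G → A^G by τ(c)(g) = 2·c(g). Then τ is post-surjective but not pre-injective. Precisely: (1) for any x, y ∈ A^G with y asymptotic to τ(x), there exists z ∈ A^G asymptotic to x with τ(z) = y; (2) there exist distinct asymptotic configurations c, d ∈ A^G with τ(c) = τ(d). -/
/-! Doubling is applied cellwise, so post-surjectivity only needs a preimage of `y g` at the
finitely many cells where `y` differs from `τ x`, while a nonzero 2-torsion point `P` placed at a
single cell gives a configuration that `τ` cannot tell apart from `0`. -/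

section PointwiseMap

variable {G α β : Type*} {f : α → β}

theorem exists_asymptotic_comp_eq_of_surjective (hf : Function.Surjective f) (x : G → α)
    (y : G → β) (hfin : {g | y g ≠ f (x g)}.Finite) :
    ∃ z : G → α, {g | z g ≠ x g}.Finite ∧ f ∘ z = y := by
  classical
  refine ⟨fun g => if y g = f (x g) then x g else (hf (y g)).choose,
    hfin.subset fun g hg h => hg (if_pos h), funext fun g => ?_⟩
  by_cases h : y g = f (x g)
  · simp [h]
  · simp [h, (hf (y g)).choose_spec]

theorem exists_ne_asymptotic_comp_eq_of_eq (g₀ : G) {a b : α} (hab : a ≠ b) (hf : f a = f b) :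
    ∃ c d : G → α, c ≠ d ∧ {g | c g ≠ d g}.Finite ∧ f ∘ c = f ∘ d := by
  classical
  refine ⟨fun _ => a, Function.update (fun _ => a) g₀ b, fun h => hab ?_, ?_, ?_⟩
  · simpa using congrFun h g₀
  · refine (Set.finite_singleton g₀).subset fun g hg => Set.mem_singleton_iff.mpr ?_
    by_contra hne
    exact hg (Function.update_of_ne hne b fun _ => a).symm
  · rw [Function.comp_update, ← hf]
    exact (Function.update_eq_self g₀ _).symm

end PointwiseMap

/-- Let `A` be a divisible abelian group (doubling is surjective) with a nonzero
`2`-torsion element, e.g. the points of a complex elliptic curve. The cellular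
automaton `τ : A^G → A^G`, `τ(c)(g) = 2·c(g)`, is post-surjective but not
pre-injective. -/
theorem doubling_postSurjective_not_preInjective (G A : Type*) [Group G] [AddCommGroup A]
    (hdiv : Function.Surjective fun a : A => (2 : ℤ) • a)
    (htor : ∃ P : A, P ≠ 0 ∧ (2 : ℤ) • P = 0)
    (τ : (G → A) → (G → A)) (hτ : ∀ (c : G → A) (g : G), τ c g = (2 : ℤ) • c g) :
    (∀ x y : G → A, {g | y g ≠ τ x g}.Finite →
        ∃ z : G → A, {g | z g ≠ x g}.Finite ∧ τ z = y) ∧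
    ∃ c d : G → A, c ≠ d ∧ {g | c g ≠ d g}.Finite ∧ τ c = τ d := by
  have hτ_comp : ∀ c, τ c = (fun a : A => (2 : ℤ) • a) ∘ c := fun c => funext (hτ c)
  constructor
  · intro x y hfin
    simp only [hτ] at hfin
    obtain ⟨z, hzx, hzy⟩ := exists_asymptotic_comp_eq_of_surjective hdiv x y hfin
    exact ⟨z, hzx, by rw [hτ_comp, hzy]⟩
  · obtain ⟨P, hP, hP2⟩ := htor
    obtain ⟨c, d, hcd, hfin, hτcd⟩ :=
      exists_ne_asymptotic_comp_eq_of_eq (1 : G) hP (f := fun a : A => (2 : ℤ) • a)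
        (by rw [hP2, smul_zero])
    exact ⟨c, d, hcd, hfin, by rw [hτ_comp, hτ_comp, hτcd]⟩
end

section
/- Let G be a group and K an algebraically closed field. There exist a finite algebraic group X over K (namely X = ℤ/4ℤ) and an algebraic group cellular automaton τ : X^G → X^G that is (••)-pre-injective but not (•)-pre-injective: for every finite E ⊆ G, dim τ((X^E)_0) = dim X^E = 0, yet τ((X^E)_0) = τ(H_0) for the proper closed subset H = (X ∖ {0})^E ⊊ X^E (here H_0 = H × {0}^{G∖E}). -/
/-!
Every configuration space here is Hausdorff, so its irreducible closed subsets are points and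
all Krull dimensions vanish. On the other hand `2 * 2 = 2 * 0` in `ZMod 4`: replacing each zero
value inside `E` by `2` does not change the image under `τ`, so configurations that are nonzero
on all of `E` already have the full image.
-/

theorem topologicalKrullDim_eq_zero_of_t2Space (X : Type*) [TopologicalSpace X] [T2Space X]
    [Nonempty X] : topologicalKrullDim X = 0 := by
  refine le_antisymm (Order.krullDim_nonpos_iff_forall_isMax.mpr fun Z Y hZY ↦ ?_) ?_
  · obtain ⟨z, hz⟩ := Z.2.nonempty
    refine (hZY.antisymm' fun y hy ↦ ?_).le
    rwa [Y.2.isPreirreducible.subsingleton hy (hZY hz)]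
  · obtain ⟨x⟩ := ‹Nonempty X›
    have : Nonempty (TopologicalSpace.IrreducibleCloseds X) :=
      ⟨⟨{x}, isIrreducible_singleton, isClosed_singleton⟩⟩
    exact Order.krullDim_nonneg

theorem image_supported_eq_image_supported_ne_zero {G X Y : Type*} [Zero X] (φ : X → Y)
    {u : X} (hu : u ≠ 0) (hφu : φ u = φ 0) (E : Set G) :
    (fun c g ↦ φ (c g)) '' {c : G → X | ∀ g ∉ E, c g = 0}
      = (fun c g ↦ φ (c g)) '' {c : G → X | (∀ g ∈ E, c g ≠ 0) ∧ ∀ g ∉ E, c g = 0} := by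
  classical
  refine (Set.image_mono fun c hc ↦ hc.2).antisymm' ?_
  rintro _ ⟨c, hc, rfl⟩
  refine ⟨fun g ↦ if g ∈ E ∧ c g = 0 then u else c g, ⟨fun g hg ↦ ?_, fun g hg ↦ ?_⟩, ?_⟩
  · by_cases h : c g = 0 <;> simp [hg, h, hu]
  · simp [hg, hc g hg]
  · funext g
    by_cases h : g ∈ E ∧ c g = 0 <;> simp [h, hφu]

theorem twostar_not_star_example_general (G : Type*)
    [TopologicalSpace (ZMod 4)] [DiscreteTopology (ZMod 4)] :
    ∃ τ : (G → ZMod 4) → (G → ZMod 4),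
      (∀ (c : G → ZMod 4) (g : G), τ c g = 2 * c g) ∧
      (∀ E : Finset G,
        topologicalKrullDim (τ '' {c : G → ZMod 4 | ∀ g ∉ E, c g = 0}) = 0 ∧
        topologicalKrullDim (E → ZMod 4) = 0) ∧
      (∀ E : Finset G,
        τ '' {c : G → ZMod 4 | ∀ g ∉ E, c g = 0}
          = τ '' {c : G → ZMod 4 | (∀ g ∈ E, c g ≠ 0) ∧ ∀ g ∉ E, c g = 0} ∧
        IsClosed {x : E → ZMod 4 | ∀ m : E, x m ≠ 0} ∧
        (E.Nonempty → {x : E → ZMod 4 | ∀ m : E, x m ≠ 0} ≠ Set.univ)) := by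
  refine ⟨fun c g ↦ 2 * c g, fun _ _ ↦ rfl, fun E ↦ ⟨?_, ?_⟩, fun E ↦ ⟨?_, isClosed_discrete _, ?_⟩⟩
  · have : Nonempty ((fun c g ↦ 2 * c g) '' {c : G → ZMod 4 | ∀ g ∉ E, c g = 0}) :=
      ⟨_, 0, fun _ _ ↦ rfl, rfl⟩
    exact topologicalKrullDim_eq_zero_of_t2Space _
  · exact topologicalKrullDim_eq_zero_of_t2Space _
  · exact image_supported_eq_image_supported_ne_zero (2 * ·) (u := 2) (by decide) (by decide) _
  · rintro ⟨m, hm⟩ huniv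
    have h0 : (0 : E → ZMod 4) ∈ {x : E → ZMod 4 | ∀ m : E, x m ≠ 0} := huniv ▸ Set.mem_univ _
    exact h0 ⟨m, hm⟩ rfl

/-- For every group `G` and algebraically closed field `K` there are a finite
algebraic group `X` over `K` (namely `X = ℤ/4ℤ`, whose Zariski topology is
discrete) and an algebraic group cellular automaton `τ : X^G → X^G` (namely
`τ(c)(g) = 2·c(g)`) which is `(••)`-pre-injective but not `(•)`-pre-injective:
for every finite `E ⊆ G`, `dim τ((X^E)_0) = dim X^E = 0`, yet
`τ((X^E)_0) = τ(H_0)` for the subset `H = (X ∖ {0})^E`, which is a proper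
closed subset of `X^E` whenever `E` is nonempty. -/
theorem twostar_not_star_example (G : Type*) [Group G]
    (K : Type*) [Field K] [IsAlgClosed K]
    [TopologicalSpace (ZMod 4)] [DiscreteTopology (ZMod 4)] :
    ∃ τ : (G → ZMod 4) → (G → ZMod 4),
      (∀ (c : G → ZMod 4) (g : G), τ c g = 2 * c g) ∧
      (∀ E : Finset G,
        topologicalKrullDim (τ '' {c : G → ZMod 4 | ∀ g ∉ E, c g = 0}) = 0 ∧
        topologicalKrullDim (E → ZMod 4) = 0) ∧
      (∀ E : Finset G,
        τ '' {c : G → ZMod 4 | ∀ g ∉ E, c g = 0}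
          = τ '' {c : G → ZMod 4 | (∀ g ∈ E, c g ≠ 0) ∧ ∀ g ∉ E, c g = 0} ∧
        IsClosed {x : E → ZMod 4 | ∀ m : E, x m ≠ 0} ∧
        (E.Nonempty → {x : E → ZMod 4 | ∀ m : E, x m ≠ 0} ≠ Set.univ)) :=
  twostar_not_star_example_general G
end

section
/- Let G be a countable group, A a set, and Σ ⊆ A^G a subshift closed in the prodiscrete topology with the following uniform strong irreducibility property: there is a finite Δ ⊆ G such that for all x, y ∈ Σ and every finite E ⊆ G, there is z ∈ Σ with z = y on E and z = x outside EΔ. Let τ : Σ → Σ be the restriction of a cellular automaton whose image τ(Σ) is closed in A^G for the prodiscrete topology. If τ is post-surjective (for x ∈ Σ, y ∈ Σ asymptotic to τ(x), there exists z ∈ Σ asymptotic to x with τ(z) = y), then τ is surjective. -/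
open Pointwise Filter Set

/-! Every point of a uniformly strongly irreducible subshift can be approximated on any finite
window by a point of the subshift asymptotic to `τ x₀`; by post-surjectivity these approximants
lie in the image of `τ`, which is closed, so it contains the whole subshift. -/

theorem mem_closure_of_forall_finset_exists_agree {ι : Type*} {π : ι → Type*}
    [∀ i, TopologicalSpace (π i)] {S : Set (∀ i, π i)} {y : ∀ i, π i}
    (h : ∀ I : Finset ι, ∃ z ∈ S, ∀ i ∈ I, z i = y i) : y ∈ closure S := by
  choose z hzS hzy using h
  refine mem_closure_of_tendsto (b := atTop) (f := z) ?_ (Eventually.of_forall hzS)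
  refine tendsto_pi_nhds.2 fun i => tendsto_nhds_of_eventually_eq ?_
  filter_upwards [eventually_ge_atTop {i}] with I hI
  exact hzy I i (Finset.singleton_subset_iff.1 hI)

theorem subset_closure_setOf_finite_ne {ι : Type*} {π : ι → Type*}
    [∀ i, TopologicalSpace (π i)] {X : Set (∀ i, π i)}
    (hglue : ∀ x ∈ X, ∀ y ∈ X, ∀ E : Finset ι,
      ∃ z ∈ X, (∀ i ∈ E, z i = y i) ∧ {i | z i ≠ x i}.Finite)
    {p : ∀ i, π i} (hp : p ∈ X) : X ⊆ closure {z ∈ X | {i | z i ≠ p i}.Finite} := by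
  intro y hy
  refine mem_closure_of_forall_finset_exists_agree fun E => ?_
  obtain ⟨z, hz, hzy, hzp⟩ := hglue p hp y hy E
  exact ⟨z, ⟨hz, hzp⟩, hzy⟩

theorem exists_agree_and_finite_ne_of_eq_off_mul {G α : Type*} [Mul G] {X : Set (G → α)}
    {Δ : Finset G} (hΔ : ∀ x ∈ X, ∀ y ∈ X, ∀ E : Finset G,
      ∃ z ∈ X, (∀ g ∈ E, z g = y g) ∧ ∀ g : G, g ∉ (E : Set G) * (Δ : Set G) → z g = x g) :
    ∀ x ∈ X, ∀ y ∈ X, ∀ E : Finset G,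
      ∃ z ∈ X, (∀ g ∈ E, z g = y g) ∧ {g | z g ≠ x g}.Finite := by
  intro x hx y hy E
  obtain ⟨z, hz, hzy, hzx⟩ := hΔ x hx y hy E
  refine ⟨z, hz, hzy, (E.finite_toSet.mul Δ.finite_toSet).subset fun g hg => ?_⟩
  by_contra hgE
  exact hg (hzx g hgE)

theorem postSurjective_implies_surjective_on_subshift_general
    (G A : Type*) [Group G] [TopologicalSpace A]
    (Sig : Set (G → A))
    (hsi : ∃ Δ : Finset G, ∀ x ∈ Sig, ∀ y ∈ Sig, ∀ E : Finset G,
      ∃ z ∈ Sig, (∀ g ∈ E, z g = y g) ∧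
        ∀ g : G, g ∉ (E : Set G) * (Δ : Set G) → z g = x g)
    (τ : (G → A) → (G → A))
    (hmaps : Set.MapsTo τ Sig Sig)
    (himclosed : IsClosed (τ '' Sig))
    (hpost : ∀ x ∈ Sig, ∀ y ∈ Sig, {g | y g ≠ τ x g}.Finite →
      ∃ z ∈ Sig, {g | z g ≠ x g}.Finite ∧ τ z = y) :
    τ '' Sig = Sig := by
  obtain ⟨Δ, hΔ⟩ := hsi
  rcases Sig.eq_empty_or_nonempty with rfl | ⟨x₀, hx₀⟩
  · exact image_empty τ
  have hasymp : {z ∈ Sig | {g | z g ≠ τ x₀ g}.Finite} ⊆ τ '' Sig := fun z ⟨hz, hfin⟩ =>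
    let ⟨w, hw, _, hwz⟩ := hpost x₀ hx₀ z hz hfin
    ⟨w, hw, hwz⟩
  refine (image_subset_iff.2 hmaps).antisymm ?_
  calc Sig ⊆ closure {z ∈ Sig | {g | z g ≠ τ x₀ g}.Finite} :=
        subset_closure_setOf_finite_ne (exists_agree_and_finite_ne_of_eq_off_mul hΔ) (hmaps hx₀)
    _ ⊆ τ '' Sig := himclosed.closure_subset_iff.2 hasymp

/-- Let `G` be a countable group, `A` a set (with the discrete topology, so that
`A^G` carries the prodiscrete topology), and `Σ ⊆ A^G` a closed subshift which is
uniformly strongly irreducible: there is a finite `Δ ⊆ G` such that for all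
`x, y ∈ Σ` and finite `E ⊆ G` there is `z ∈ Σ` with `z = y` on `E` and `z = x`
outside `EΔ`. If `τ : Σ → Σ` is the restriction of a cellular automaton whose
image `τ(Σ)` is closed in `A^G`, and `τ` is post-surjective, then `τ` is
surjective, i.e. `τ(Σ) = Σ`. -/
theorem postSurjective_implies_surjective_on_subshift
    (G A : Type*) [Group G] [Countable G] [TopologicalSpace A] [DiscreteTopology A]
    (Sig : Set (G → A))
    (hshift : ∀ (g : G), ∀ c ∈ Sig, (fun h => c (g⁻¹ * h)) ∈ Sig)
    (hclosed : IsClosed Sig)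
    (hsi : ∃ Δ : Finset G, ∀ x ∈ Sig, ∀ y ∈ Sig, ∀ E : Finset G,
      ∃ z ∈ Sig, (∀ g ∈ E, z g = y g) ∧
        ∀ g : G, g ∉ (E : Set G) * (Δ : Set G) → z g = x g)
    (M : Finset G) (μ : (M → A) → A) (τ : (G → A) → (G → A))
    (hloc : ∀ (c : G → A) (g : G), τ c g = μ fun m => c (g * (m : G)))
    (hmaps : Set.MapsTo τ Sig Sig)
    (himclosed : IsClosed (τ '' Sig))
    (hpost : ∀ x ∈ Sig, ∀ y ∈ Sig, {g | y g ≠ τ x g}.Finite →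
      ∃ z ∈ Sig, {g | z g ≠ x g}.Finite ∧ τ z = y) :
    τ '' Sig = Sig :=
  postSurjective_implies_surjective_on_subshift_general G A Sig hsi τ hmaps himclosed hpost
end

section
/- Let K be an uncountable algebraically closed field and A an algebraic variety over K (or more generally a K-variety viewed via its K-points). If (T_n)_{n ∈ ℕ} is a decreasing sequence of constructible subsets of A with ⋂_{n ∈ ℕ} T_n = ∅, then T_N = ∅ for some N ∈ ℕ. Equivalently, if (Z_n)_{n ∈ ℕ} is an increasing sequence of constructible subsets with ⋃_n Z_n = A, then Z_N = A for some N. -/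
/-- The Zariski topology on affine `n`-space over a field `K`: closed sets are
the zero loci of ideals of polynomials. -/
instance zariskiAffine (K : Type*) [Field K] (n : ℕ) : TopologicalSpace (Fin n → K) :=
  TopologicalSpace.generateFrom
    {U | ∃ I : Ideal (MvPolynomial (Fin n) K), U = (MvPolynomial.zeroLocus K I)ᶜ}

/-- A subset is constructible if it is a finite union of locally closed subsets. -/
def IsConstructibleSet {X : Type*} [TopologicalSpace X] (s : Set X) : Prop :=
  ∃ (m : ℕ) (f : Fin m → Set X), (∀ i, IsLocallyClosed (f i)) ∧ s = ⋃ i, f i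

/-!
By Noetherian induction there is a minimal closed set `Y` meeting every `T m`. Minimality makes
`Y` irreducible and every `Y ∩ T m` dense in `Y`, so `T m` contains a nonempty open piece
`Y ∩ {g m ≠ 0}` of `Y`. Points of `Y` at which no `g m` vanishes come from `K`-algebra maps to `K`
out of the localization of the coordinate ring of `Y` at the `g m`. That localization has
countable dimension over `K`, so its residue fields are algebraic over the uncountable field `K`,
hence equal to `K`, and such a point exists.
-/

open Set MvPolynomial Cardinal

universe u

section Topology

variable {X : Type*} [TopologicalSpace X]

theorem isConstructibleSet_iUnion {ι : Type*} [Finite ι] {f : ι → Set X}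
    (hf : ∀ i, IsLocallyClosed (f i)) : IsConstructibleSet (⋃ i, f i) := by
  obtain ⟨m, ⟨e⟩⟩ := Finite.exists_equiv_fin ι
  exact ⟨m, f ∘ e.symm, fun i => hf _, (e.symm.surjective.iUnion_comp f).symm⟩

theorem IsConstructibleSet.compl {s : Set X} (hs : IsConstructibleSet s) :
    IsConstructibleSet sᶜ := by
  classical
  obtain ⟨m, f, hf, rfl⟩ := hs
  choose U Z hU hZ hf using hf
  -- `c i` records whether a point of the complement avoids `U i` or `Z i`
  have : (⋃ i, f i)ᶜ =
      ⋃ c : Fin m → Bool, (⋂ i, ⋂ (_ : c i = false), (Z i)ᶜ) ∩ ⋂ i, ⋂ (_ : c i = true), (U i)ᶜ := by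
    ext x
    simp only [hf, mem_compl_iff, mem_iUnion, mem_inter_iff, mem_iInter, not_exists, not_and]
    refine ⟨fun h => ⟨fun i => decide (x ∉ U i), fun i hi => ?_, fun i hi => ?_⟩, ?_⟩
    · exact h i (by simpa using hi)
    · simpa using hi
    · rintro ⟨c, hZc, hUc⟩ i hxU hxZ
      cases hci : c i
      exacts [hZc i hci hxZ, hUc i hci hxU]
  rw [this]
  exact isConstructibleSet_iUnion fun c => ⟨_, _,
    isOpen_iInter_of_finite fun i => isOpen_iInter_of_finite fun _ => (hZ i).isOpen_compl,
    isClosed_iInter fun i => isClosed_iInter fun _ => (hU i).isClosed_compl, rfl⟩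

theorem IsConstructibleSet.image_val {A : Set X} (hA : IsLocallyClosed A) {s : Set A}
    (hs : IsConstructibleSet s) : IsConstructibleSet (Subtype.val '' s) := by
  obtain ⟨m, f, hf, rfl⟩ := hs
  rw [image_iUnion]
  exact ⟨m, _, fun i => (hf i).image Topology.IsInducing.subtypeVal (by simpa using hA), rfl⟩

theorem IsIrreducible.exists_subset_of_subset_iUnion {ι : Type*} [Finite ι] {Y : Set X}
    (hY : IsIrreducible Y) {Z : ι → Set X} (hZ : ∀ i, IsClosed (Z i)) (h : Y ⊆ ⋃ i, Z i) :
    ∃ i, Y ⊆ Z i := by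
  classical
  have := Fintype.ofFinite ι
  obtain ⟨z, hz, hYz⟩ := isIrreducible_iff_sUnion_isClosed.1 hY (Finset.univ.image Z)
    (by simpa using hZ) (by simpa using h)
  obtain ⟨i, -, rfl⟩ := Finset.mem_image.1 hz
  exact ⟨i, hYz⟩

theorem IsConstructibleSet.exists_isOpen_inter_subset {Y T : Set X} (hT : IsConstructibleSet T)
    (hY : IsIrreducible Y) (hYT : Y ⊆ closure (Y ∩ T)) :
    ∃ U, IsOpen U ∧ (Y ∩ U).Nonempty ∧ Y ∩ U ⊆ T := by
  obtain ⟨m, f, hf, rfl⟩ := hT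
  choose U Z hU hZ hf using hf
  rw [inter_iUnion, closure_iUnion_of_finite] at hYT
  obtain ⟨i, hi⟩ := hY.exists_subset_of_subset_iUnion (fun _ => isClosed_closure) hYT
  have hYZ : Y ⊆ Z i := hi.trans (closure_minimal (fun x hx => (hf i ▸ hx.2).2) (hZ i))
  refine ⟨U i, hU i, ?_, fun x hx => mem_iUnion.2 ⟨i, hf i ▸ ⟨hx.2, hYZ hx.1⟩⟩⟩
  obtain ⟨x, hxY, hxf⟩ := closure_nonempty_iff.1 (hY.nonempty.mono hi)
  exact ⟨x, hxY, (hf i ▸ hxf).1⟩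

theorem exists_minimal_isClosed [TopologicalSpace.NoetherianSpace X] {P : Set X → Prop}
    {Y : Set X} (hY : IsClosed Y) (hP : P Y) : ∃ Z, Minimal (fun Z => IsClosed Z ∧ P Z) Z := by
  obtain ⟨Z, hZ, hmin⟩ :=
    exists_minimal_of_wellFoundedLT (fun Z : TopologicalSpace.Closeds X => P Z) ⟨⟨Y, hY⟩, hP⟩
  exact ⟨Z, ⟨Z.isClosed, hZ⟩, fun W hW hWZ => hmin (y := ⟨W, hW.1⟩) hW.2 hWZ⟩

variable {T : ℕ → Set X} {Y : Set X}

theorem Minimal.isIrreducible_of_antitone (hT : Antitone T)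
    (hY : Minimal (fun Y => IsClosed Y ∧ ∀ m, (Y ∩ T m).Nonempty) Y) : IsIrreducible Y := by
  refine ⟨(hY.prop.2 0).mono inter_subset_left,
    isPreirreducible_iff_isClosed_union_isClosed.2 fun Z₁ Z₂ hZ₁ hZ₂ hYZ => ?_⟩
  have hmiss : ∀ Z, IsClosed Z → ¬ Y ⊆ Z → ∃ m, Y ∩ Z ∩ T m = ∅ := fun Z hZ hYZ => by
    by_contra! h
    exact hYZ ((hY.2 ⟨hY.prop.1.inter hZ, h⟩ inter_subset_left).trans inter_subset_right)
  -- if each `Y ∩ Zⱼ` missed some `T mⱼ`, then `Y` would miss `T (max m₁ m₂)`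
  by_contra! h
  obtain ⟨m₁, hm₁⟩ := hmiss Z₁ hZ₁ h.1
  obtain ⟨m₂, hm₂⟩ := hmiss Z₂ hZ₂ h.2
  obtain ⟨x, hxY, hxT⟩ := hY.prop.2 (max m₁ m₂)
  rcases hYZ hxY with hx | hx
  · exact hm₁.subset ⟨⟨hxY, hx⟩, hT (le_max_left _ _) hxT⟩
  · exact hm₂.subset ⟨⟨hxY, hx⟩, hT (le_max_right _ _) hxT⟩

theorem Minimal.subset_closure_inter_of_antitone (hT : Antitone T)
    (hY : Minimal (fun Y => IsClosed Y ∧ ∀ m, (Y ∩ T m).Nonempty) Y) (m : ℕ) :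
    Y ⊆ closure (Y ∩ T m) := by
  refine hY.2 ⟨isClosed_closure, fun k => ?_⟩ (closure_minimal inter_subset_left hY.prop.1)
  obtain ⟨x, hxY, hxT⟩ := hY.prop.2 (max m k)
  exact ⟨x, subset_closure ⟨hxY, hT (le_max_left _ _) hxT⟩, hT (le_max_right _ _) hxT⟩

end Topology

theorem Algebra.IsAlgebraic.of_rank_le_aleph0 {K L : Type*} [Field K] [Uncountable K] [Field L]
    [Algebra K L] (h : Module.rank K L ≤ ℵ₀) : Algebra.IsAlgebraic K L := by
  refine ⟨fun x => of_not_not fun hx => ?_⟩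
  have hK := (Transcendental.linearIndependent_sub_inv hx).cardinal_lift_le_rank
  exact not_countable (α := K)
    (mk_le_aleph0_iff.1 (lift_le_aleph0.1 (hK.trans (lift_le_aleph0.2 h))))

theorem exists_algHom_of_rank_le_aleph0 {K A : Type*} [Field K] [IsAlgClosed K] [Uncountable K]
    [CommRing A] [Nontrivial A] [Algebra K A] (h : Module.rank K A ≤ ℵ₀) :
    Nonempty (A →ₐ[K] K) := by
  obtain ⟨m, hm⟩ := Ideal.exists_maximal A
  let := Ideal.Quotient.field m
  have : Algebra.IsAlgebraic K (A ⧸ m) := .of_rank_le_aleph0 <|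
    (LinearMap.rank_le_of_surjective (Ideal.Quotient.mkₐ K m).toLinearMap
      Ideal.Quotient.mk_surjective).trans h
  let e := AlgEquiv.ofBijective (Algebra.ofId K (A ⧸ m))
    IsAlgClosed.algebraMap_bijective_of_isIntegral
  exact ⟨e.symm.toAlgHom.comp (Ideal.Quotient.mkₐ K m)⟩

theorem IsLocalization.rank_le_aleph0 {K : Type*} {R A : Type u} [Field K] [CommRing R]
    [Algebra K R] [CommRing A] [Algebra R A] [Algebra K A] [IsScalarTower K R A] (S : Submonoid R)
    [IsLocalization S A] (hS : (S : Set R).Countable) (hR : Module.rank K R ≤ ℵ₀) :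
    Module.rank K A ≤ ℵ₀ := by
  let φ : (S →₀ R) →ₗ[K] A := Finsupp.lsum K fun s =>
    (LinearMap.mulLeft K (IsLocalization.mk' _ 1 s)).comp
      (IsScalarTower.toAlgHom K R A).toLinearMap
  have hφ : Function.Surjective φ := by
    intro x
    obtain ⟨⟨r, s⟩, rfl⟩ := IsLocalization.mk'_surjective S x
    refine ⟨Finsupp.single s r, ?_⟩
    simp [φ, IsLocalization.mk'_eq_mul_mk'_one r s, mul_comm]
  refine (LinearMap.rank_le_of_surjective φ hφ).trans ?_
  have : Countable S := hS.to_subtype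
  rw [rank_finsupp]
  exact aleph0_mul_aleph0 ▸
    mul_le_mul' (lift_le_aleph0.2 (mk_le_aleph0_iff.2 this)) (lift_le_aleph0.2 hR)

theorem MvPolynomial.exists_mem_zeroLocus_forall_eval_ne_zero (K : Type*) [Field K]
    [IsAlgClosed K] [Uncountable K] {σ : Type*} [Countable σ] (P : Ideal (MvPolynomial σ K))
    [P.IsPrime] (g : ℕ → MvPolynomial σ K) (hg : ∀ m, g m ∉ P) :
    ∃ x ∈ zeroLocus K P, ∀ m, eval x (g m) ≠ 0 := by
  let R := MvPolynomial σ K ⧸ P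
  let S : Submonoid R := Submonoid.closure (range fun m => Ideal.Quotient.mk P (g m))
  have hS : S ≤ nonZeroDivisors R := Submonoid.closure_le.2 <| range_subset_iff.2 fun m =>
    mem_nonZeroDivisors_of_ne_zero fun h => hg m (Ideal.Quotient.eq_zero_iff_mem.1 h)
  have hScount : (S : Set R).Countable := by
    rw [show S = _ from (FreeMonoid.mrange_lift _).symm, MonoidHom.coe_mrange]
    exact countable_range _
  have hR : Module.rank K R ≤ ℵ₀ :=
    (LinearMap.rank_le_of_surjective (Ideal.Quotient.mkₐ K P).toLinearMap
      Ideal.Quotient.mk_surjective).trans (by simp [MvPolynomial.rank_eq_lift])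
  have : Nontrivial (Localization S) := (IsLocalization.injective _ hS).nontrivial
  obtain ⟨φ⟩ := exists_algHom_of_rank_le_aleph0
    (IsLocalization.rank_le_aleph0 (A := Localization S) S hScount hR)
  let ψ := φ.comp ((IsScalarTower.toAlgHom K R (Localization S)).comp (Ideal.Quotient.mkₐ K P))
  have hψ : ψ = aeval fun i => ψ (X i) := algHom_ext fun i => by simp
  refine ⟨fun i => ψ (X i), fun f hf => ?_, fun m => ?_⟩
  · rw [← hψ]
    change φ (algebraMap R _ (Ideal.Quotient.mk P f)) = 0
    rw [Ideal.Quotient.eq_zero_iff_mem.2 hf, map_zero, map_zero]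
  · rw [← coe_aeval_eq_eval, ← hψ]
    exact ((IsLocalization.map_units (Localization S)
      (⟨_, Submonoid.subset_closure ⟨m, rfl⟩⟩ : S)).map φ).ne_zero

section Zariski

variable {K : Type*} [Field K] {n : ℕ}

theorem isClosed_zeroLocus (I : Ideal (MvPolynomial (Fin n) K)) : IsClosed (zeroLocus K I) :=
  isOpen_compl_iff.1 (TopologicalSpace.isOpen_generateFrom_of_mem ⟨I, rfl⟩)

theorem isClosed_setOf_eval_eq_zero (f : MvPolynomial (Fin n) K) :
    IsClosed {x : Fin n → K | eval x f = 0} := by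
  simpa [zeroLocus_span] using isClosed_zeroLocus (Ideal.span {f})

theorem IsOpen.exists_eval_ne_zero_subset {U : Set (Fin n → K)} (hU : IsOpen U) {x : Fin n → K}
    (hx : x ∈ U) : ∃ f : MvPolynomial (Fin n) K, eval x f ≠ 0 ∧ {y | eval y f ≠ 0} ⊆ U := by
  induction hU generalizing x with
  | basic U hU =>
    obtain ⟨I, rfl⟩ := hU
    obtain ⟨f, hfI, hfx⟩ : ∃ f ∈ I, eval x f ≠ 0 := by simpa using hx
    exact ⟨f, hfx, fun y hy hyI => hy (by simpa using hyI f hfI)⟩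
  | univ => exact ⟨1, by simp, subset_univ _⟩
  | inter U V _ _ ihU ihV =>
    obtain ⟨f, hfx, hfU⟩ := ihU hx.1
    obtain ⟨g, hgx, hgV⟩ := ihV hx.2
    refine ⟨f * g, by simp [hfx, hgx], fun y hy => ?_⟩
    replace hy : eval y f * eval y g ≠ 0 := by simpa using hy
    exact ⟨hfU (left_ne_zero_of_mul hy), hgV (right_ne_zero_of_mul hy)⟩
  | sUnion S _ ih =>
    obtain ⟨U, hUS, hxU⟩ := hx
    obtain ⟨f, hfx, hfU⟩ := ih U hUS hxU
    exact ⟨f, hfx, hfU.trans (subset_sUnion_of_mem hUS)⟩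

theorem zeroLocus_vanishingIdeal_of_isClosed {C : Set (Fin n → K)} (hC : IsClosed C) :
    zeroLocus K (vanishingIdeal K C) = C := by
  refine (zeroLocus_vanishingIdeal_le C).antisymm' fun x hx => of_not_not fun hxC => ?_
  obtain ⟨f, hfx, hfC⟩ := hC.isOpen_compl.exists_eval_ne_zero_subset hxC
  have hf : f ∈ vanishingIdeal K C := fun y hy => by
    by_contra h
    exact hfC (by simpa using h) hy
  exact hfx (by simpa using hx f hf)

instance : TopologicalSpace.NoetherianSpace (Fin n → K) := by
  let f : TopologicalSpace.Opens (Fin n → K) → Ideal (MvPolynomial (Fin n) K) :=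
    fun U => vanishingIdeal K (U : Set (Fin n → K))ᶜ
  refine StrictMono.wellFoundedGT (f := f) (Monotone.strictMono_of_injective
    (fun U V h => vanishingIdeal_anti_mono (compl_subset_compl.2 h)) fun U V h => ?_)
  have := congr_arg (zeroLocus K) h
  simp only [f, zeroLocus_vanishingIdeal_of_isClosed U.isOpen.isClosed_compl,
    zeroLocus_vanishingIdeal_of_isClosed V.isOpen.isClosed_compl, compl_inj_iff] at this
  exact TopologicalSpace.Opens.ext this

theorem IsIrreducible.vanishingIdeal_isPrime {Y : Set (Fin n → K)} (hY : IsIrreducible Y) :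
    (vanishingIdeal K Y).IsPrime := by
  refine ⟨fun h => ?_, fun {f g} hfg => ?_⟩
  · obtain ⟨x, hx⟩ := hY.nonempty
    simpa using (Ideal.eq_top_iff_one _).1 h x hx
  · have hcover : Y ⊆ {x | eval x f = 0} ∪ {x | eval x g = 0} := fun x hx => by
      simpa using hfg x hx
    rcases isPreirreducible_iff_isClosed_union_isClosed.1 hY.isPreirreducible _ _
      (isClosed_setOf_eval_eq_zero f) (isClosed_setOf_eval_eq_zero g) hcover with h | h
    · exact Or.inl fun x hx => by simpa using h hx
    · exact Or.inr fun x hx => by simpa using h hx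

theorem IsIrreducible.inter_iInter_nonempty [IsAlgClosed K] [Uncountable K] {Y : Set (Fin n → K)}
    (hY : IsIrreducible Y) (hYc : IsClosed Y) {U : ℕ → Set (Fin n → K)} (hU : ∀ m, IsOpen (U m))
    (hYU : ∀ m, (Y ∩ U m).Nonempty) : (Y ∩ ⋂ m, U m).Nonempty := by
  have := hY.vanishingIdeal_isPrime
  have hg : ∀ m, ∃ g, g ∉ vanishingIdeal K Y ∧ {y | eval y g ≠ 0} ⊆ U m := fun m => by
    obtain ⟨x, hxY, hxU⟩ := hYU m
    obtain ⟨g, hgx, hgU⟩ := (hU m).exists_eval_ne_zero_subset hxU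
    exact ⟨g, fun hg => hgx (by simpa using hg x hxY), hgU⟩
  choose g hgY hgU using hg
  obtain ⟨x, hx, hxg⟩ := exists_mem_zeroLocus_forall_eval_ne_zero K _ g hgY
  exact ⟨x, zeroLocus_vanishingIdeal_of_isClosed hYc ▸ hx, mem_iInter.2 fun m => hgU m (hxg m)⟩

end Zariski

theorem nonempty_iInter_of_antitone_isConstructibleSet {K : Type*} [Field K] [IsAlgClosed K]
    [Uncountable K] {n : ℕ} {T : ℕ → Set (Fin n → K)} (hT : ∀ m, IsConstructibleSet (T m))
    (hanti : Antitone T) (hne : ∀ m, (T m).Nonempty) : (⋂ m, T m).Nonempty := by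
  obtain ⟨Y, hY⟩ := exists_minimal_isClosed (P := fun Y => ∀ m, (Y ∩ T m).Nonempty)
    isClosed_univ fun m => by simpa using hne m
  have hirr := hY.isIrreducible_of_antitone hanti
  choose U hU hYU hUT using fun m =>
    (hT m).exists_isOpen_inter_subset hirr (hY.subset_closure_inter_of_antitone hanti m)
  obtain ⟨x, hxY, hxU⟩ := hirr.inter_iInter_nonempty hY.prop.1 hU hYU
  exact ⟨x, mem_iInter.2 fun m => hUT m ⟨hxY, mem_iInter.1 hxU m⟩⟩

/-- Over an uncountable algebraically closed field `K`, for an (affine) variety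
`A` (a Zariski closed subset of affine `n`-space, with the induced topology):
a decreasing sequence of constructible subsets of `A` with empty intersection
is eventually empty; equivalently, an increasing sequence of constructible
subsets covering `A` eventually equals `A`. -/
theorem constructible_chain_stabilizes
    (K : Type*) [Field K] [IsAlgClosed K] [Uncountable K]
    (n : ℕ) (A : Set (Fin n → K)) (hA : IsClosed A) :
    (∀ T : ℕ → Set A, (∀ m, IsConstructibleSet (T m)) → Antitone T →
      (⋂ m, T m) = ∅ → ∃ N, T N = ∅) ∧
    (∀ Z : ℕ → Set A, (∀ m, IsConstructibleSet (Z m)) → Monotone Z →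
      (⋃ m, Z m) = Set.univ → ∃ N, Z N = Set.univ) := by
  have decreasing : ∀ T : ℕ → Set A, (∀ m, IsConstructibleSet (T m)) → Antitone T →
      (⋂ m, T m) = ∅ → ∃ N, T N = ∅ := by
    intro T hT hanti hempty
    by_contra! hne
    obtain ⟨x, hx⟩ := nonempty_iInter_of_antitone_isConstructibleSet
      (fun m => (hT m).image_val hA.isLocallyClosed) (fun _ _ h => image_mono (hanti h))
      fun m => (hne m).image Subtype.val
    rw [← Subtype.val_injective.injOn.image_iInter_eq, hempty, image_empty] at hx
    exact hx
  refine ⟨decreasing, fun Z hZ hmono hunion => ?_⟩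
  obtain ⟨N, hN⟩ := decreasing (fun m => (Z m)ᶜ) (fun m => (hZ m).compl)
    (fun _ _ h => compl_subset_compl.2 (hmono h)) (by rw [← compl_iUnion, hunion, compl_univ])
  exact ⟨N, compl_empty_iff.1 hN⟩
end
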